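/- arXiv:1512.06547 — 2 statements merged into one kernel-verified Lean document; each statement's English description precedes it below -/
import Mathlib

section
/- Let k be a positive integer, Λ a finitely aligned k-graph, R a commutative ring with 1, and let KP_R(Λ) with Kumjian-Pask Λ-family {s_λ, s_{μ*}} be the universal Kumjian-Pask algebra of Λ over R, graded over ℤ^k by KP_R(Λ)_n := span_R{s_λ s_{μ*} : d(λ) − d(μ) = n}. If I is a ℤ^k-graded ideal of KP_R(Λ), then I is generated as an ideal by the set I_0 := I ∩ KP_R(Λ)_0. -/
/-- A higher-rank graph (`k`-graph): a countable small category together with a degree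
functor `d` into `ℕᵏ` satisfying the unique factorisation property.  The morphisms form the
type `Path`; the objects (vertices) are identified with the identity paths via `vertex`.
Composition `comp p q` is only meaningful when `src p = rng q`; all axioms are stated under
this compatibility assumption. -/
structure KGraph (k : ℕ) where
  Obj : Type
  Path : Type
  countable_obj : Countable Obj
  countable_path : Countable Path
  src : Path → Obj
  rng : Path → Obj
  vertex : Obj → Path
  comp : Path → Path → Path
  deg : Path → Fin k → ℕ
  src_vertex : ∀ v, src (vertex v) = v
  rng_vertex : ∀ v, rng (vertex v) = v
  deg_vertex : ∀ v, deg (vertex v) = 0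
  vertex_comp : ∀ p, comp (vertex (rng p)) p = p
  comp_vertex : ∀ p, comp p (vertex (src p)) = p
  src_comp : ∀ p q, src p = rng q → src (comp p q) = src q
  rng_comp : ∀ p q, src p = rng q → rng (comp p q) = rng p
  deg_comp : ∀ p q, src p = rng q → deg (comp p q) = deg p + deg q
  comp_assoc : ∀ p q r, src p = rng q → src q = rng r →
    comp (comp p q) r = comp p (comp q r)
  factorisation : ∀ (p : Path) (m n : Fin k → ℕ), deg p = m + n →
    ∃! x : Path × Path, src x.1 = rng x.2 ∧ deg x.1 = m ∧ deg x.2 = n ∧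
      comp x.1 x.2 = p

namespace KGraph

variable {k : ℕ} (Λ : KGraph k)

/-- `Λ^min(p,q)`: the pairs `(ρ,τ)` with `pρ = qτ` a minimal common extension of `p` and `q`. -/
def minPairs (p q : Λ.Path) : Set (Λ.Path × Λ.Path) :=
  {x | Λ.src p = Λ.rng x.1 ∧ Λ.src q = Λ.rng x.2 ∧
    Λ.comp p x.1 = Λ.comp q x.2 ∧
    Λ.deg (Λ.comp p x.1) = Λ.deg p ⊔ Λ.deg q}

/-- `MCE(p,q)`: minimal common extensions of `p` and `q`. -/
def MCE (p q : Λ.Path) : Set Λ.Path :=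
  {t | Λ.deg t = Λ.deg p ⊔ Λ.deg q ∧
    (∃ r, Λ.src p = Λ.rng r ∧ Λ.comp p r = t) ∧
    (∃ r, Λ.src q = Λ.rng r ∧ Λ.comp q r = t)}

/-- `Λ` is finitely aligned if all the sets `Λ^min(p,q)` are finite. -/
def FinitelyAligned : Prop := ∀ p q, (Λ.minPairs p q).Finite

/-- `E ⊆ vΛ` is exhaustive. -/
def Exhaustive (v : Λ.Obj) (E : Set Λ.Path) : Prop :=
  ∀ p, Λ.rng p = v → ∃ q ∈ E, (Λ.minPairs p q).Nonempty

/-- `E` is a finite exhaustive subset of `vΛ \ {v}`, i.e. an element of `FE(Λ)`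
with range vertex `v`. -/
def FE (v : Λ.Obj) (E : Set Λ.Path) : Prop :=
  E.Finite ∧ (∀ p ∈ E, Λ.rng p = v ∧ p ≠ Λ.vertex v) ∧ Λ.Exhaustive v E

/-- `Ext(p; E)`. -/
def extSet (p : Λ.Path) (E : Set Λ.Path) : Set Λ.Path :=
  ⋃ q ∈ E, {r | ∃ t, (r, t) ∈ Λ.minPairs p q}

section Family

variable {A : Type} [NonUnitalRing A]

/-- (KP1): the vertex elements are mutually orthogonal idempotents. -/
def KP1 (S : Λ.Path → A) : Prop :=
  (∀ v, S (Λ.vertex v) * S (Λ.vertex v) = S (Λ.vertex v)) ∧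
  ∀ v w, v ≠ w → S (Λ.vertex v) * S (Λ.vertex w) = 0

/-- (KP2): multiplicativity on composable paths and ghost paths.  Here `T μ` plays the
role of `S_{μ*}`. -/
def KP2 (S T : Λ.Path → A) : Prop :=
  ∀ p q, Λ.src p = Λ.rng q →
    S p * S q = S (Λ.comp p q) ∧ T q * T p = T (Λ.comp p q)

/-- (KP3): `S_{p*} S_q = ∑_{(ρ,τ) ∈ Λ^min(p,q)} S_ρ S_{τ*}` (empty sum read as `0`). -/
def KP3 (S T : Λ.Path → A) : Prop :=
  ∀ p q, T p * S q = ∑ᶠ x ∈ Λ.minPairs p q, S x.1 * T x.2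

/-- (KP4): `∏_{p ∈ E} (S_v - S_p S_{p*}) = 0` for every finite exhaustive
`E ⊆ vΛ \ {v}`.  The product is implemented as a fold over any duplicate-free list
enumerating `E`, with the harmless extra idempotent factor `S_v` in front. -/
def KP4 (S T : Λ.Path → A) : Prop :=
  ∀ (v : Λ.Obj) (l : List Λ.Path), l.Nodup → Λ.FE v {p | p ∈ l} →
    (l.map fun p => S (Λ.vertex v) - S p * T p).foldl (· * ·) (S (Λ.vertex v)) = 0

/-- A Kumjian–Pask `Λ`-family in a (not necessarily unital) ring: `S p` represents `s_p`
and `T p` represents the ghost element `s_{p*}`, with `T` and `S` agreeing on vertices. -/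
def IsKPFamily (S T : Λ.Path → A) : Prop :=
  (∀ v, T (Λ.vertex v) = S (Λ.vertex v)) ∧
  Λ.KP1 S ∧ Λ.KP2 S T ∧ Λ.KP3 S T ∧ Λ.KP4 S T

end Family

/-- `(B, s, t)` is *the* (universal) Kumjian–Pask algebra of `Λ` over `R`:
`(s, t)` is a Kumjian–Pask `Λ`-family generating `B`, and every Kumjian–Pask `Λ`-family
in an `R`-algebra `A` factors uniquely through it. -/
def IsUniversalKP (R : Type) [CommRing R] (B : Type) [NonUnitalRing B]
    [Module R B] [SMulCommClass R B B] [IsScalarTower R B B]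
    (s t : Λ.Path → B) : Prop :=
  Λ.IsKPFamily s t ∧
  NonUnitalAlgebra.adjoin R (Set.range s ∪ Set.range t) = ⊤ ∧
  ∀ (A : Type) [NonUnitalRing A] [Module R A] [SMulCommClass R A A]
    [IsScalarTower R A A] (S T : Λ.Path → A), Λ.IsKPFamily S T →
      ∃! π : B →ₙₐ[R] A, (∀ p, π (s p) = S p) ∧ (∀ p, π (t p) = T p)

/-- A boundary path of `Λ`: a degree-preserving functor `x : Ω_{k,m} → Λ`
(for `m = deg x ∈ (ℕ∪{∞})ᵏ`), recorded via its segments `seg p q = x(p,q)`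
for `p ≤ q ≤ m` (the value of `seg` outside this domain is junk), and satisfying
the boundary-path condition with respect to finite exhaustive sets. -/
structure BoundaryPath (Λ : KGraph k) where
  deg : Fin k → ℕ∞
  seg : (Fin k → ℕ) → (Fin k → ℕ) → Λ.Path
  deg_seg : ∀ p q, p ≤ q → (∀ i, (q i : ℕ∞) ≤ deg i) → Λ.deg (seg p q) = q - p
  seg_self : ∀ p, (∀ i, (p i : ℕ∞) ≤ deg i) →
    seg p p = Λ.vertex (Λ.src (seg p p))
  src_seg : ∀ p q r, p ≤ q → q ≤ r → (∀ i, (r i : ℕ∞) ≤ deg i) →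
    Λ.src (seg p q) = Λ.rng (seg q r)
  comp_seg : ∀ p q r, p ≤ q → q ≤ r → (∀ i, (r i : ℕ∞) ≤ deg i) →
    Λ.comp (seg p q) (seg q r) = seg p r
  boundary : ∀ n : Fin k → ℕ, (∀ i, (n i : ℕ∞) ≤ deg i) →
    ∀ E : Set Λ.Path, Λ.FE (Λ.src (seg n n)) E →
      ∃ p ∈ E, (∀ i, ((n + Λ.deg p) i : ℕ∞) ≤ deg i) ∧ seg n (n + Λ.deg p) = p

namespace BoundaryPath

variable {Λ : KGraph k}

/-- The vertex `x(n)` of a boundary path. -/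
def vtx (x : Λ.BoundaryPath) (n : Fin k → ℕ) : Λ.Obj := Λ.src (x.seg n n)

/-- The range `r(x) = x(0)` of a boundary path. -/
def rng (x : Λ.BoundaryPath) : Λ.Obj := x.vtx 0

end BoundaryPath

/-- `IsShift n x y` says that `y = σⁿ x` is the shift of the boundary path `x` by
`n ≤ d(x)`. -/
def IsShift (n : Fin k → ℕ) (x y : Λ.BoundaryPath) : Prop :=
  (∀ i, (n i : ℕ∞) ≤ x.deg i) ∧
  (∀ i, y.deg i = x.deg i - (n i : ℕ∞)) ∧
  ∀ p q, p ≤ q → (∀ i, (q i : ℕ∞) ≤ y.deg i) → y.seg p q = x.seg (n + p) (n + q)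

/-- `IsConcat p x y` says that `y = p·x` is the concatenation of the path `p` with the
boundary path `x` (so `y(0, d p) = p` and `σ^{d p} y = x`). -/
def IsConcat (p : Λ.Path) (x y : Λ.BoundaryPath) : Prop :=
  Λ.IsShift (Λ.deg p) y x ∧ y.seg 0 (Λ.deg p) = p

/-- A boundary path `x` is aperiodic if distinct paths with source `r(x)` give distinct
concatenations `p·x ≠ q·x`. -/
def AperiodicBP (x : Λ.BoundaryPath) : Prop :=
  ∀ p q, Λ.src p = x.rng → Λ.src q = x.rng → p ≠ q →
    ∀ y, Λ.IsConcat p x y → ¬Λ.IsConcat q x y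

/-- `Λ` is aperiodic: every vertex receives an aperiodic boundary path. -/
def Aperiodic : Prop :=
  ∀ v : Λ.Obj, ∃ x : Λ.BoundaryPath, x.rng = v ∧ Λ.AperiodicBP x

/-- `Λ` is cofinal: for every vertex `v` and boundary path `x` there is `n ≤ d(x)`
with `vΛx(n) ≠ ∅`. -/
def Cofinal : Prop :=
  ∀ (v : Λ.Obj) (x : Λ.BoundaryPath), ∃ n : Fin k → ℕ,
    (∀ i, (n i : ℕ∞) ≤ x.deg i) ∧ ∃ p, Λ.rng p = v ∧ Λ.src p = x.vtx n

/-- The boundary-path groupoid `G_Λ` as a set of triples `(x, m, y)` with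
`σᵖ x = σ^q y` and `m = p - q`. -/
def BPG : Set (Λ.BoundaryPath × (Fin k → ℤ) × Λ.BoundaryPath) :=
  {a | ∃ (p q : Fin k → ℕ) (z : Λ.BoundaryPath),
    (fun i => (p i : ℤ) - (q i : ℤ)) = a.2.1 ∧
    Λ.IsShift p a.1 z ∧ Λ.IsShift q a.2.2 z}

/-- `Z(p) = p ∂Λ`, the cylinder set of boundary paths with prefix `p`. -/
def ZC (p : Λ.Path) : Set Λ.BoundaryPath := {x | ∃ z, Λ.IsConcat p z x}

/-- `Z(p *ₛ q)`. -/
def ZP (p q : Λ.Path) : Set (Λ.BoundaryPath × (Fin k → ℤ) × Λ.BoundaryPath) :=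
  {a | a.2.1 = (fun i => (Λ.deg p i : ℤ) - (Λ.deg q i : ℤ)) ∧
    a.1 ∈ Λ.ZC p ∧ a.2.2 ∈ Λ.ZC q ∧
    ∃ z, Λ.IsShift (Λ.deg p) a.1 z ∧ Λ.IsShift (Λ.deg q) a.2.2 z}

/-- `Z(p *ₛ q \ G)`. -/
def ZPD (p q : Λ.Path) (G : Set Λ.Path) :
    Set (Λ.BoundaryPath × (Fin k → ℤ) × Λ.BoundaryPath) :=
  Λ.ZP p q \ ⋃ ν ∈ G, Λ.ZP (Λ.comp p ν) (Λ.comp q ν)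

/-- The boundary-path groupoid `G_Λ` as a type. -/
abbrev bpSpace : Type := {a // a ∈ Λ.BPG}

/-- The topology on `G_Λ` generated by the basic sets `Z(p *ₛ q \ G)` with `G` finite. -/
def bpTop : TopologicalSpace Λ.bpSpace :=
  TopologicalSpace.generateFrom
    {V | ∃ (p q : Λ.Path) (G : Set Λ.Path), Λ.src p = Λ.src q ∧
      (∀ ν ∈ G, Λ.rng ν = Λ.src p) ∧ G.Finite ∧
      V = Subtype.val ⁻¹' Λ.ZPD p q G}

theorem isShift_zero (x : Λ.BoundaryPath) : Λ.IsShift 0 x x :=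
  ⟨fun i => by simp, fun i => by simp, fun p q _ _ => by simp⟩

/-- The unit space `G_Λ^{(0)}` of the boundary-path groupoid. -/
def unitSet : Set Λ.bpSpace := {a | a.1.2.1 = 0 ∧ a.1.1 = a.1.2.2}

/-- The unit `(x, 0, x)` of `G_Λ` corresponding to a boundary path `x`. -/
def unitOf (x : Λ.BoundaryPath) : Λ.bpSpace :=
  ⟨(x, 0, x), ⟨0, 0, x, by funext i; simp, Λ.isShift_zero x, Λ.isShift_zero x⟩⟩

end KGraph

/-- The degree-`n` component `KP_R(Λ)_n = span_R{s_p t_q : d(p) - d(q) = n}`. -/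
def kpComponent {k : ℕ} (Λ : KGraph k) (R : Type) [CommRing R] {B : Type}
    [NonUnitalRing B] [Module R B] (s t : Λ.Path → B) (n : Fin k → ℤ) :
    Submodule R B :=
  Submodule.span R {b | ∃ p q : Λ.Path,
    (fun i => (Λ.deg p i : ℤ) - (Λ.deg q i : ℤ)) = n ∧ b = s p * t q}

/-- A subset of a (not necessarily unital) ring is a two-sided ideal. -/
def IsIdealSet {B : Type} [NonUnitalRing B] (I : Set B) : Prop :=
  (0 : B) ∈ I ∧ (∀ a ∈ I, ∀ b ∈ I, a + b ∈ I) ∧ (∀ a ∈ I, -a ∈ I) ∧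
  ∀ a ∈ I, ∀ b : B, a * b ∈ I ∧ b * a ∈ I


/-!
Let `x ∈ I` be homogeneous of degree `n`, say `x = ∑ rᵢ s_{Pᵢ} t_{Qᵢ}` with `d(Pᵢ) - d(Qᵢ) = n`
and `s(Pᵢ) = s(Qᵢ)`. Each `x s_{Qᵢ} t_{Pᵢ}` lies in `I ∩ KP_0`, so every
`x s_{Qᵢ} t_{Qᵢ} = (x s_{Qᵢ} t_{Pᵢ})(s_{Pᵢ} t_{Qᵢ})` lies in any ideal containing `I ∩ KP_0`.
The range projections `s_Q t_Q` commute and the `i`-th summand is fixed by the `i`-th projection, so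
`x ∏ᵢ (1 - s_{Qᵢ} t_{Qᵢ}) = 0`; expanding the product exhibits `x` in the ideal generated by
the `x s_{Qᵢ} t_{Qᵢ}`. Gradedness of `I` reduces everything to homogeneous elements.
-/

namespace KGraph

variable {k : ℕ} {Λ : KGraph k}

theorem eq_vertex_of_deg_eq_zero {p : Λ.Path} (h : Λ.deg p = 0) :
    p = Λ.vertex (Λ.rng p) := by
  -- `p · s(p)` and `r(p) · p` are two factorisations of `p` through degrees `(0, 0)`.
  obtain ⟨_, _, hu⟩ := Λ.factorisation p 0 0 (by rw [h, add_zero])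
  have h₁ := hu (p, Λ.vertex (Λ.src p))
    ⟨by rw [Λ.rng_vertex], h, Λ.deg_vertex _, Λ.comp_vertex p⟩
  have h₂ := hu (Λ.vertex (Λ.rng p), p)
    ⟨by rw [Λ.src_vertex], Λ.deg_vertex _, h, Λ.vertex_comp p⟩
  exact congrArg Prod.fst (h₁.trans h₂.symm)

theorem minPairs_self (p : Λ.Path) :
    Λ.minPairs p p = {(Λ.vertex (Λ.src p), Λ.vertex (Λ.src p))} := by
  ext ⟨x, y⟩
  simp only [minPairs, Set.mem_ofPred_eq, Set.mem_singleton_iff, Prod.mk.injEq, sup_idem]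
  constructor
  · rintro ⟨hx, hy, hxy, hdeg⟩
    have dx : Λ.deg x = 0 := add_eq_left.1 (by rw [← Λ.deg_comp p x hx, hdeg])
    have dy : Λ.deg y = 0 := add_eq_left.1 (by rw [← Λ.deg_comp p y hy, ← hxy, hdeg])
    exact ⟨by rw [eq_vertex_of_deg_eq_zero dx, hx],
      by rw [eq_vertex_of_deg_eq_zero dy, hy]⟩
  · rintro ⟨rfl, rfl⟩
    exact ⟨(Λ.rng_vertex _).symm, (Λ.rng_vertex _).symm, rfl, by rw [Λ.comp_vertex]⟩

theorem swap_mem_minPairs {p q : Λ.Path} {x : Λ.Path × Λ.Path}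
    (hx : x ∈ Λ.minPairs p q) : x.swap ∈ Λ.minPairs q p := by
  obtain ⟨h₁, h₂, h₃, h₄⟩ := hx
  exact ⟨h₂, h₁, h₃.symm, show Λ.deg (Λ.comp q x.2) = _ by rw [← h₃, h₄, sup_comm]⟩

theorem deg_add_deg_of_mem_minPairs {p q : Λ.Path} {x : Λ.Path × Λ.Path}
    (hx : x ∈ Λ.minPairs p q) : Λ.deg p + Λ.deg x.1 = Λ.deg q + Λ.deg x.2 := by
  rw [← Λ.deg_comp _ _ hx.1, ← Λ.deg_comp _ _ hx.2.1, hx.2.2.1]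

namespace IsKPFamily

variable {A : Type} [NonUnitalRing A] {S T : Λ.Path → A} (hF : Λ.IsKPFamily S T)
include hF

theorem ghost_mul_self (p : Λ.Path) : T p * S p = S (Λ.vertex (Λ.src p)) := by
  rw [hF.2.2.2.1 p p, minPairs_self, finsum_mem_singleton, hF.1, hF.2.1.1]

theorem mul_vertex_src (p : Λ.Path) : S p * S (Λ.vertex (Λ.src p)) = S p := by
  rw [(hF.2.2.1 p _ (Λ.rng_vertex _).symm).1, Λ.comp_vertex]

theorem vertex_src_mul_ghost (q : Λ.Path) : S (Λ.vertex (Λ.src q)) * T q = T q := by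
  rw [← hF.1, (hF.2.2.1 q _ (Λ.rng_vertex _).symm).2, Λ.comp_vertex]

theorem mul_ghost_eq_zero {p q : Λ.Path} (h : Λ.src p ≠ Λ.src q) : S p * T q = 0 :=
  calc S p * T q = S p * (S (Λ.vertex (Λ.src p)) * S (Λ.vertex (Λ.src q))) * T q := by
        rw [← mul_assoc, hF.mul_vertex_src, mul_assoc, hF.vertex_src_mul_ghost]
    _ = 0 := by rw [hF.2.1.2 _ _ h, mul_zero, zero_mul]

theorem mul_ghost_mul_proj (p q : Λ.Path) : S p * T q * (S q * T q) = S p * T q := by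
  rw [mul_assoc, ← mul_assoc (T q), hF.ghost_mul_self, hF.vertex_src_mul_ghost]

theorem ghost_mul_eq_sum (hΛ : Λ.FinitelyAligned) (p q : Λ.Path) :
    T p * S q = ∑ x ∈ (hΛ p q).toFinset, S x.1 * T x.2 := by
  rw [hF.2.2.2.1, finsum_mem_eq_finite_toFinset_sum _ (hΛ p q)]

theorem mul_ghost_mul_mul_ghost (hΛ : Λ.FinitelyAligned) {p q u w : Λ.Path}
    (hpq : Λ.src p = Λ.src q) (huw : Λ.src u = Λ.src w) :
    S p * T q * (S u * T w) =
      ∑ x ∈ (hΛ q u).toFinset, S (Λ.comp p x.1) * T (Λ.comp w x.2) := by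
  rw [mul_assoc, ← mul_assoc (T q), hF.ghost_mul_eq_sum hΛ, Finset.sum_mul, Finset.mul_sum]
  refine Finset.sum_congr rfl fun x hx => ?_
  obtain ⟨h₁, h₂, -, -⟩ := (Set.Finite.mem_toFinset _).1 hx
  rw [mul_assoc (S x.1), ← mul_assoc (S p), (hF.2.2.1 p x.1 (hpq.trans h₁)).1,
    (hF.2.2.1 w x.2 (huw.symm.trans h₂)).2]

theorem commute_mul_ghost_self (hΛ : Λ.FinitelyAligned) (p q : Λ.Path) :
    Commute (S p * T p) (S q * T q) := by
  rw [Commute, SemiconjBy, hF.mul_ghost_mul_mul_ghost hΛ rfl rfl,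
    hF.mul_ghost_mul_mul_ghost hΛ rfl rfl]
  refine Finset.sum_nbij' Prod.swap Prod.swap (fun x hx => ?_) (fun x hx => ?_)
    (fun _ _ => rfl) (fun _ _ => rfl) (fun x hx => ?_)
  · simpa using swap_mem_minPairs ((Set.Finite.mem_toFinset _).1 hx)
  · simpa using swap_mem_minPairs ((Set.Finite.mem_toFinset _).1 hx)
  · obtain ⟨-, -, h, -⟩ := (Set.Finite.mem_toFinset _).1 hx
    simp only [Prod.fst_swap, Prod.snd_swap, h]

end IsKPFamily

end KGraph

theorem TwoSidedIdeal.sum_mem_of_mul_mem {A : Type*} [NonUnitalRing A] (J : TwoSidedIdeal A)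
    {ι : Type*} (S : Finset ι) {b e : ι → A} (he : ∀ i ∈ S, ∀ j ∈ S, Commute (e i) (e j))
    (hb : ∀ i ∈ S, b i * e i = b i) (hJ : ∀ i ∈ S, (∑ j ∈ S, b j) * e i ∈ J) :
    ∑ i ∈ S, b i ∈ J := by
  classical
  induction S using Finset.induction_on generalizing b with
  | empty => simp
  | insert j S hj ih =>
    have he' : ∀ i ∈ S, Commute (e j) (e i) := fun i hi =>
      he j (Finset.mem_insert_self j S) i (Finset.mem_insert_of_mem hi)
    -- Replacing `x` by `x - x e_j` kills the `j`-th summand and keeps the other hypotheses.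
    have hcut : ∑ i ∈ S, (b i - b i * e j) =
        (∑ i ∈ insert j S, b i) - (∑ i ∈ insert j S, b i) * e j := by
      rw [Finset.sum_mul, ← Finset.sum_sub_distrib, Finset.sum_insert hj,
        hb j (Finset.mem_insert_self j S), sub_self, zero_add]
    have hmem := ih (b := fun i => b i - b i * e j)
      (fun i hi i' hi' => he i (Finset.mem_insert_of_mem hi) i' (Finset.mem_insert_of_mem hi'))
      (fun i hi => ?_) (fun i hi => ?_)
    · rw [hcut] at hmem
      simpa using J.add_mem hmem (hJ j (Finset.mem_insert_self j S))
    · have hbi := hb i (Finset.mem_insert_of_mem hi)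
      rw [sub_mul, hbi, mul_assoc, (he' i hi).eq, ← mul_assoc, hbi]
    · have hi' := hJ i (Finset.mem_insert_of_mem hi)
      rw [hcut, sub_mul, mul_assoc, (he' i hi).eq, ← mul_assoc]
      exact J.sub_mem hi' (J.mul_mem_right _ _ hi')

def IsIdealSet.toTwoSidedIdeal {B : Type} [NonUnitalRing B] {I : Set B} (hI : IsIdealSet I) :
    TwoSidedIdeal B :=
  .mk' I hI.1 (hI.2.1 _ · _ ·) (hI.2.2.1 _ ·) (fun {x y} hy => (hI.2.2.2 y hy x).2)
    (fun {x y} hx => (hI.2.2.2 x hx y).1)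

@[simp]
theorem IsIdealSet.mem_toTwoSidedIdeal {B : Type} [NonUnitalRing B] {I : Set B}
    (hI : IsIdealSet I) {x : B} : x ∈ hI.toTwoSidedIdeal ↔ x ∈ I :=
  TwoSidedIdeal.mem_mk' ..

section Grading

variable {k : ℕ} {Λ : KGraph k} {R : Type} [CommRing R] {B : Type} [NonUnitalRing B]
  [Module R B] {s t : Λ.Path → B}

theorem kpComponent_eq_span_src_eq (hF : Λ.IsKPFamily s t) (n : Fin k → ℤ) :
    kpComponent Λ R s t n = Submodule.span R {b | ∃ p q : Λ.Path, Λ.src p = Λ.src q ∧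
      (fun i => (Λ.deg p i : ℤ) - (Λ.deg q i : ℤ)) = n ∧ b = s p * t q} := by
  refine le_antisymm (Submodule.span_le.2 ?_) (Submodule.span_mono ?_)
  · rintro _ ⟨p, q, hn, rfl⟩
    by_cases h : Λ.src p = Λ.src q
    · exact Submodule.subset_span ⟨p, q, h, hn, rfl⟩
    · rw [SetLike.mem_coe, hF.mul_ghost_eq_zero h]
      exact Submodule.zero_mem _
  · rintro _ ⟨p, q, -, hn, rfl⟩
    exact ⟨p, q, hn, rfl⟩

variable [SMulCommClass R B B] [IsScalarTower R B B]

theorem kpComponent_mul_mem (hΛ : Λ.FinitelyAligned) (hF : Λ.IsKPFamily s t)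
    {m n : Fin k → ℤ} {x y : B} (hx : x ∈ kpComponent Λ R s t m)
    (hy : y ∈ kpComponent Λ R s t n) : x * y ∈ kpComponent Λ R s t (m + n) := by
  rw [kpComponent_eq_span_src_eq hF] at hx hy
  have hxy := Submodule.apply_mem_map₂ (LinearMap.mul R B) hx hy
  rw [Submodule.map₂_span_span] at hxy
  refine Submodule.span_le.2 ?_ hxy
  rintro _ ⟨_, ⟨p, q, hpq, rfl, rfl⟩, _, ⟨u, w, huw, rfl, rfl⟩, rfl⟩
  change s p * t q * (s u * t w) ∈ _
  rw [hF.mul_ghost_mul_mul_ghost hΛ hpq huw]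
  refine Submodule.sum_mem _ fun z hz => Submodule.subset_span ⟨_, _, ?_, rfl⟩
  replace hz := (Set.Finite.mem_toFinset _).1 hz
  have hdeg := KGraph.deg_add_deg_of_mem_minPairs hz
  funext i
  have hdegi := congrFun hdeg i
  rw [Λ.deg_comp _ _ (hpq.trans hz.1), Λ.deg_comp _ _ (huw.symm.trans hz.2.1)]
  simp only [Pi.add_apply] at hdegi ⊢
  push_cast
  omega

theorem mem_of_mem_kpComponent (hΛ : Λ.FinitelyAligned) (hF : Λ.IsKPFamily s t)
    {I J : TwoSidedIdeal B} (hIJ : ∀ y ∈ I, y ∈ kpComponent Λ R s t 0 → y ∈ J)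
    {n : Fin k → ℤ} {x : B} (hxI : x ∈ I) (hx : x ∈ kpComponent Λ R s t n) : x ∈ J := by
  obtain ⟨N, c, g, hsum⟩ :=
    Submodule.mem_span_set'.1 ((kpComponent_eq_span_src_eq hF n).le hx)
  choose P Q hsrc hdeg hg using fun i => (g i).2
  rw [← hsum]
  refine J.sum_mem_of_mul_mem Finset.univ (e := fun i => s (Q i) * t (Q i))
    (fun i _ j _ => hF.commute_mul_ghost_self hΛ _ _) (fun i _ => ?_) (fun i _ => ?_)
  · rw [hg i, smul_mul_assoc, hF.mul_ghost_mul_proj]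
  · have hneg : s (Q i) * t (P i) ∈ kpComponent Λ R s t (-n) :=
      Submodule.subset_span ⟨Q i, P i, by rw [← hdeg i]; funext; simp, rfl⟩
    have hdeg0 := kpComponent_mul_mem hΛ hF hx hneg
    rw [add_neg_cancel] at hdeg0
    have hfac : s (Q i) * t (Q i) = s (Q i) * t (P i) * (s (P i) * t (Q i)) := by
      rw [mul_assoc, ← mul_assoc (t (P i)), hF.ghost_mul_self, hsrc i,
        hF.vertex_src_mul_ghost]
    rw [hsum, hfac, ← mul_assoc]
    exact J.mul_mem_right _ _ (hIJ _ (I.mul_mem_right _ _ hxI) hdeg0)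

end Grading

theorem graded_ideal_generated_by_core_general {k : ℕ} (Λ : KGraph k)
    (hΛ : Λ.FinitelyAligned) (R : Type) [CommRing R]
    (B : Type) [NonUnitalRing B] [Module R B] [SMulCommClass R B B]
    [IsScalarTower R B B] (s t : Λ.Path → B)
    (hU : Λ.IsUniversalKP R B s t)
    (I : Set B) (hI : IsIdealSet I)
    (hgr : ∀ a ∈ I, ∃ c : (Fin k → ℤ) →₀ B,
      (∀ n, c n ∈ I ∧ c n ∈ kpComponent Λ R s t n) ∧ (c.sum fun _ x => x) = a) :
    I = ⋂₀ {J : Set B | IsIdealSet J ∧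
      I ∩ (kpComponent Λ R s t 0 : Set B) ⊆ J} := by
  refine Set.Subset.antisymm (fun a ha => Set.mem_sInter.2 ?_)
    (Set.sInter_subset_of_mem ⟨hI, Set.inter_subset_left⟩)
  rintro J ⟨hJ, hIJ⟩
  obtain ⟨c, hc, rfl⟩ := hgr a ha
  have hcJ (n : Fin k → ℤ) : c n ∈ hJ.toTwoSidedIdeal :=
    mem_of_mem_kpComponent hΛ hU.1 (I := hI.toTwoSidedIdeal)
      (fun y hyI hy0 => by simpa using hIJ ⟨by simpa using hyI, hy0⟩)
      (by simpa using (hc n).1) (hc n).2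
  simpa [Finsupp.sum] using sum_mem fun n _ => hcJ n

/-- a `ℤᵏ`-graded ideal `I` of `KP_R(Λ)` is generated, as an ideal, by
`I₀ = I ∩ KP_R(Λ)_0`; i.e. `I` is the smallest ideal containing `I₀`. -/
theorem graded_ideal_generated_by_core {k : ℕ} (hk : 0 < k) (Λ : KGraph k)
    (hΛ : Λ.FinitelyAligned) (R : Type) [CommRing R]
    (B : Type) [NonUnitalRing B] [Module R B] [SMulCommClass R B B]
    [IsScalarTower R B B] (s t : Λ.Path → B)
    (hU : Λ.IsUniversalKP R B s t)
    (I : Set B) (hI : IsIdealSet I)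
    (hgr : ∀ a ∈ I, ∃ c : (Fin k → ℤ) →₀ B,
      (∀ n, c n ∈ I ∧ c n ∈ kpComponent Λ R s t n) ∧ (c.sum fun _ x => x) = a) :
    I = ⋂₀ {J : Set B | IsIdealSet J ∧
      I ∩ (kpComponent Λ R s t 0 : Set B) ⊆ J} :=
  graded_ideal_generated_by_core_general Λ hΛ R B s t hU I hI hgr
end

section
/- Let k be a positive integer, Λ a finitely aligned k-graph with boundary-path groupoid G_Λ, and R a commutative ring with 1. Let {Z(λ_i *_s μ_i \ G_i)}_{i=1}^n be a finite collection of basic compact open bisections of G_Λ and U := ⋃_{i=1}^n Z(λ_i *_s μ_i \ G_i). Then the indicator function 1_U : G_Λ → R lies in span_R{1_{Z(λ *_s μ \ G)} : (λ,μ) ∈ Λ *_s Λ, G ⊆ s(λ)Λ finite}. -/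
/-!
The indicators of the cylinders `Z(p *ₛ q)` span a subalgebra of `G_Λ → R`: by finite
alignment, `Z(p *ₛ q) ∩ Z(a *ₛ b)` is the disjoint union of the `Z(pρ *ₛ qρ)` over the finitely
many `(ρ, τ) ∈ Λ^min(p, a)` with `qρ = bτ`. So the span is closed under
`1_{V ∪ W} = 1_V + 1_W - 1_V 1_W`, and it contains
`1_{Z(p *ₛ q \ G)} = 1_{Z(p *ₛ q)} - 1_{⋃_{ν ∈ G} Z(pν *ₛ qν)}`, while each cylinder is itself
the basic set with `G = ∅`.
-/

section IndicatorSpan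

variable {α ι R A : Type*}

theorem mul_mem_span_of_mul_mem [CommSemiring R] [Semiring A] [Algebra R A] {S : Set A}
    (hS : ∀ f ∈ S, ∀ g ∈ S, f * g ∈ Submodule.span R S) {f g : A}
    (hf : f ∈ Submodule.span R S) (hg : g ∈ Submodule.span R S) :
    f * g ∈ Submodule.span R S := by
  have hle : Submodule.span R S * Submodule.span R S ≤ Submodule.span R S := by
    rw [Submodule.span_mul_span, Submodule.span_le]
    rintro _ ⟨f, hf, g, hg, rfl⟩
    exact hS f hf g hg
  exact hle (Submodule.mul_mem_mul hf hg)

theorem indicator_union_mem_of_mul_mem [Ring R] {M : Submodule R (α → R)}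
    (hM : ∀ f ∈ M, ∀ g ∈ M, f * g ∈ M) {s t : Set α} (hs : s.indicator 1 ∈ M)
    (ht : t.indicator 1 ∈ M) : (s ∪ t).indicator 1 ∈ M := by
  rw [eq_sub_of_add_eq (Set.indicator_union_add_inter (1 : α → R) s t),
    Set.inter_indicator_one]
  exact M.sub_mem (M.add_mem hs ht) (hM _ hs _ ht)

theorem indicator_biUnion_mem_of_mul_mem [Ring R] {M : Submodule R (α → R)}
    (hM : ∀ f ∈ M, ∀ g ∈ M, f * g ∈ M) {I : Set ι} (hI : I.Finite) {s : ι → Set α}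
    (hs : ∀ i ∈ I, (s i).indicator 1 ∈ M) :
    (⋃ i ∈ I, s i).indicator 1 ∈ M := by
  induction I, hI using Set.Finite.induction_on with
  | empty =>
    rw [Set.biUnion_empty, Set.indicator_empty]
    exact M.zero_mem
  | insert _ _ ih =>
    rw [Set.biUnion_insert]
    exact indicator_union_mem_of_mul_mem hM (hs _ (Set.mem_insert _ _))
      (ih fun i hi => hs i (Set.mem_insert_of_mem _ hi))

theorem indicator_biUnion_mem_of_pairwiseDisjoint [Semiring R] {M : Submodule R (α → R)}
    {I : Set ι} (hI : I.Finite) {s : ι → Set α} (hd : I.PairwiseDisjoint s)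
    (hs : ∀ i ∈ I, (s i).indicator 1 ∈ M) :
    (⋃ i ∈ I, s i).indicator 1 ∈ M := by
  induction I, hI using Set.Finite.induction_on with
  | empty =>
    rw [Set.biUnion_empty, Set.indicator_empty]
    exact M.zero_mem
  | @insert a I ha _ ih =>
    rw [Set.biUnion_insert, Set.indicator_union_of_disjoint]
    · exact M.add_mem (hs a (Set.mem_insert _ _))
        (ih (hd.subset (Set.subset_insert _ _)) fun i hi => hs i (Set.mem_insert_of_mem _ hi))
    · exact Set.disjoint_iUnion₂_right.2 fun i hi =>
        hd (Set.mem_insert _ _) (Set.mem_insert_of_mem _ hi) (ne_of_mem_of_not_mem hi ha).symm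

end IndicatorSpan

namespace KGraph

variable {k : ℕ} {Λ : KGraph k}

theorem eq_and_eq_of_comp_eq {a b c d : Λ.Path} (hab : Λ.src a = Λ.rng b)
    (hcd : Λ.src c = Λ.rng d) (hac : Λ.deg a = Λ.deg c) (h : Λ.comp a b = Λ.comp c d) :
    a = c ∧ b = d := by
  have hbd : Λ.deg b = Λ.deg d := by
    have := Λ.deg_comp a b hab
    rw [h, Λ.deg_comp c d hcd, hac] at this
    exact (add_left_cancel this).symm
  obtain ⟨_, -, huniq⟩ :=
    Λ.factorisation (Λ.comp a b) (Λ.deg a) (Λ.deg b) (Λ.deg_comp a b hab)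
  exact Prod.ext_iff.1 <|
    (huniq (a, b) ⟨hab, rfl, rfl, rfl⟩).trans (huniq (c, d) ⟨hcd, hac.symm, hbd.symm, h.symm⟩).symm

theorem comp_left_cancel {p ν ν' : Λ.Path} (h : Λ.src p = Λ.rng ν) (h' : Λ.src p = Λ.rng ν')
    (heq : Λ.comp p ν = Λ.comp p ν') : ν = ν' :=
  (eq_and_eq_of_comp_eq h h' rfl heq).2

namespace BoundaryPath

def LeDeg (x : Λ.BoundaryPath) (n : Fin k → ℕ) : Prop := ∀ i, (n i : ℕ∞) ≤ x.deg i

variable {x y : Λ.BoundaryPath} {m n p q r : Fin k → ℕ}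

theorem LeDeg.mono (h : x.LeDeg n) (hmn : m ≤ n) : x.LeDeg m :=
  fun i => (Nat.cast_le.2 (hmn i)).trans (h i)

theorem LeDeg.sup (hm : x.LeDeg m) (hn : x.LeDeg n) : x.LeDeg (m ⊔ n) :=
  fun i => (Nat.mono_cast.map_max (a := m i) (b := n i)).trans_le (max_le (hm i) (hn i))

theorem leDeg_zero (x : Λ.BoundaryPath) : x.LeDeg 0 := fun _ => by simp

theorem deg_seg_zero (hn : x.LeDeg n) : Λ.deg (x.seg 0 n) = n := by
  rw [x.deg_seg 0 n zero_le hn, tsub_zero]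

theorem seg_eq_seg_of_le (hr : x.LeDeg r) (hr' : y.LeDeg r) (hpq : p ≤ q) (hqr : q ≤ r)
    (h : x.seg p r = y.seg p r) : x.seg p q = y.seg p q ∧ x.seg q r = y.seg q r :=
  eq_and_eq_of_comp_eq (x.src_seg p q r hpq hqr hr) (y.src_seg p q r hpq hqr hr')
    (by rw [x.deg_seg p q hpq (hr.mono hqr), y.deg_seg p q hpq (hr'.mono hqr)])
    (by rw [x.comp_seg p q r hpq hqr hr, y.comp_seg p q r hpq hqr hr', h])

theorem seg_eq_seg_of_seg_zero_eq (hr : x.LeDeg r) (hr' : y.LeDeg r) (hpq : p ≤ q)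
    (hqr : q ≤ r) (h : x.seg 0 r = y.seg 0 r) : x.seg p q = y.seg p q :=
  (seg_eq_seg_of_le hr hr' hpq hqr
    (seg_eq_seg_of_le hr hr' zero_le (hpq.trans hqr) h).2).1

theorem seg_zero_eq_of_comp {a τ : Λ.Path} (hat : Λ.src a = Λ.rng τ)
    (hx : x.LeDeg (Λ.deg (Λ.comp a τ))) (h : x.seg 0 (Λ.deg (Λ.comp a τ)) = Λ.comp a τ) :
    x.seg 0 (Λ.deg a) = a ∧ x.seg (Λ.deg a) (Λ.deg a + Λ.deg τ) = τ := by
  rw [Λ.deg_comp a τ hat] at hx h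
  have hle : Λ.deg a ≤ Λ.deg a + Λ.deg τ := le_self_add
  refine eq_and_eq_of_comp_eq (x.src_seg 0 _ _ zero_le hle hx) hat
    (deg_seg_zero (hx.mono hle)) ?_
  rw [x.comp_seg 0 _ _ zero_le hle hx, h]

theorem leDeg_add_iff (hm : x.LeDeg m) :
    (∀ i, (n i : ℕ∞) ≤ x.deg i - m i) ↔ x.LeDeg (m + n) := by
  simp only [LeDeg, Pi.add_apply, Nat.cast_add]
  exact forall_congr' fun i => (ENat.addLECancellable_natCast _).le_tsub_iff_left (hm i)

def shift (x : Λ.BoundaryPath) (m : Fin k → ℕ) (hm : x.LeDeg m) : Λ.BoundaryPath where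
  deg i := x.deg i - m i
  seg p q := x.seg (m + p) (m + q)
  deg_seg p q hpq hq := by
    rw [x.deg_seg _ _ (add_le_add_right hpq m) ((leDeg_add_iff hm).1 hq),
      add_tsub_add_eq_tsub_left]
  seg_self p hp := x.seg_self _ ((leDeg_add_iff hm).1 hp)
  src_seg p q r hpq hqr hr := x.src_seg _ _ _ (add_le_add_right hpq m) (add_le_add_right hqr m)
    ((leDeg_add_iff hm).1 hr)
  comp_seg p q r hpq hqr hr := x.comp_seg _ _ _ (add_le_add_right hpq m) (add_le_add_right hqr m)
    ((leDeg_add_iff hm).1 hr)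
  boundary p hp E hE := by
    obtain ⟨ν, hνE, hν, hseg⟩ := x.boundary _ ((leDeg_add_iff hm).1 hp) E hE
    rw [add_assoc] at hν hseg
    exact ⟨ν, hνE, (leDeg_add_iff hm).2 hν, hseg⟩

end BoundaryPath

open BoundaryPath

variable {x y z w w' : Λ.BoundaryPath} {m n p q r : Fin k → ℕ}

theorem isShift_shift (x : Λ.BoundaryPath) (hm : x.LeDeg m) : Λ.IsShift m x (x.shift m hm) :=
  ⟨hm, fun _ => rfl, fun _ _ _ _ => rfl⟩

theorem IsShift.leDeg (h : Λ.IsShift m x y) : x.LeDeg m := h.1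

theorem IsShift.leDeg_iff (h : Λ.IsShift m x y) : y.LeDeg n ↔ x.LeDeg (m + n) := by
  rw [LeDeg, funext h.2.1]; exact leDeg_add_iff h.1

theorem IsShift.deg_eq (h : Λ.IsShift m x y) (i : Fin k) : x.deg i = y.deg i + m i := by
  rw [h.2.1, tsub_add_cancel_of_le (h.1 i)]

theorem IsShift.trans (h₁ : Λ.IsShift m x y) (h₂ : Λ.IsShift n y z) :
    Λ.IsShift (m + n) x z := by
  refine ⟨h₁.leDeg_iff.1 h₂.1, fun i => ?_, fun p q hpq hq => ?_⟩
  · rw [h₂.2.1, h₁.2.1, tsub_tsub, Pi.add_apply, Nat.cast_add]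
  · rw [h₂.2.2 p q hpq hq, h₁.2.2 _ _ (add_le_add_right hpq n) (h₂.leDeg_iff.1 hq),
      add_assoc, add_assoc]

theorem IsShift.of_add (h : Λ.IsShift (m + n) x z) (hy : Λ.IsShift m x y) :
    Λ.IsShift n y z := by
  refine ⟨hy.leDeg_iff.2 h.1, fun i => ?_, fun p q hpq hq => ?_⟩
  · rw [h.2.1, hy.2.1, tsub_tsub, Pi.add_apply, Nat.cast_add]
  · rw [h.2.2 p q hpq hq, hy.2.2 _ _ (add_le_add_right hpq n)
      (hy.leDeg_iff.2 (by rw [← add_assoc]; exact h.leDeg_iff.1 hq)), add_assoc, add_assoc]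

theorem IsShift.seg_zero_comp {μ : Λ.Path} (h : Λ.IsShift m x z) (hx : x.seg 0 m = μ)
    (hr : z.LeDeg r) :
    Λ.src μ = Λ.rng (z.seg 0 r) ∧ Λ.comp μ (z.seg 0 r) = x.seg 0 (m + r) := by
  have hmr : x.LeDeg (m + r) := h.leDeg_iff.1 hr
  rw [h.2.2 0 r zero_le hr, add_zero, ← hx]
  exact ⟨x.src_seg _ _ _ zero_le le_self_add hmr,
    x.comp_seg _ _ _ zero_le le_self_add hmr⟩

/-- Concatenation is unique: `IsShift 0 w w'` says `w = w'` up to the junk values of `seg`. -/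
theorem IsConcat.isShift_zero {τ : Λ.Path} (hw : Λ.IsConcat τ z w) (hw' : Λ.IsConcat τ z w') :
    Λ.IsShift 0 w w' := by
  have hdeg : ∀ i, w'.deg i = w.deg i := fun i => by rw [hw.1.deg_eq, hw'.1.deg_eq]
  refine ⟨leDeg_zero w, by simpa using hdeg, fun p q hpq hq => ?_⟩
  set N := q ⊔ Λ.deg τ
  have hwN : w.LeDeg N := LeDeg.sup (fun i => (hdeg i).symm ▸ hq i) hw.1.leDeg
  have hw'N : w'.LeDeg N := LeDeg.sup hq hw'.1.leDeg
  have hτN : Λ.deg τ + (N - Λ.deg τ) = N := add_tsub_cancel_of_le le_sup_right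
  have hseg : ∀ {v}, Λ.IsConcat τ z v → v.LeDeg N →
      v.seg 0 N = Λ.comp τ (z.seg 0 (N - Λ.deg τ)) := fun hv hvN => by
    rw [(hv.1.seg_zero_comp hv.2 (hv.1.leDeg_iff.2 (by rwa [hτN]))).2, hτN]
  rw [zero_add, zero_add, seg_eq_seg_of_seg_zero_eq hwN hw'N hpq le_sup_left
    ((hseg hw hwN).trans (hseg hw' hw'N).symm)]

theorem ZP_comp_subset {a b τ : Λ.Path} (hab : Λ.src a = Λ.src b) (hat : Λ.src a = Λ.rng τ) :
    Λ.ZP (Λ.comp a τ) (Λ.comp b τ) ⊆ Λ.ZP a b := by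
  have hbt : Λ.src b = Λ.rng τ := hab ▸ hat
  rintro ⟨x, m, y⟩ ⟨hm, ⟨-, -, hx⟩, ⟨-, -, hy⟩, z, hxz, hyz⟩
  obtain ⟨hxa, hxτ⟩ := seg_zero_eq_of_comp hat hxz.leDeg hx
  obtain ⟨hyb, hyτ⟩ := seg_zero_eq_of_comp hbt hyz.leDeg hy
  rw [Λ.deg_comp a τ hat] at hxz
  rw [Λ.deg_comp b τ hbt] at hyz
  have hxa' : x.LeDeg (Λ.deg a) := hxz.leDeg.mono le_self_add
  have hyb' : y.LeDeg (Λ.deg b) := hyz.leDeg.mono le_self_add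
  have hx' : Λ.IsConcat τ z (x.shift _ hxa') :=
    ⟨hxz.of_add (isShift_shift x hxa'), by simpa only [shift, add_zero] using hxτ⟩
  have hy' : Λ.IsConcat τ z (y.shift _ hyb') :=
    ⟨hyz.of_add (isShift_shift y hyb'), by simpa only [shift, add_zero] using hyτ⟩
  refine ⟨?_, ⟨_, isShift_shift x hxa', hxa⟩, ⟨_, isShift_shift y hyb', hyb⟩, _,
    isShift_shift x hxa', ?_⟩
  · rw [hm, Λ.deg_comp a τ hat, Λ.deg_comp b τ hbt]
    funext i
    simp only [Pi.add_apply, Nat.cast_add]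
    ring
  · simpa only [add_zero] using (isShift_shift y hyb').trans (hy'.isShift_zero hx')

theorem mem_ZP_comp {p q : Λ.Path} {m : Fin k → ℤ}
    (hm : m = fun i => (Λ.deg p i : ℤ) - Λ.deg q i)
    (hx : x.seg 0 (Λ.deg p) = p) (hy : y.seg 0 (Λ.deg q) = q)
    (hxz : Λ.IsShift (Λ.deg p) x z) (hyz : Λ.IsShift (Λ.deg q) y z) (hr : z.LeDeg r) :
    (x, m, y) ∈ Λ.ZP (Λ.comp p (z.seg 0 r)) (Λ.comp q (z.seg 0 r)) := by
  obtain ⟨hpρ, hxρ⟩ := hxz.seg_zero_comp hx hr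
  obtain ⟨hqρ, hyρ⟩ := hyz.seg_zero_comp hy hr
  have hdp : Λ.deg (Λ.comp p (z.seg 0 r)) = Λ.deg p + r := by
    rw [Λ.deg_comp _ _ hpρ, deg_seg_zero hr]
  have hdq : Λ.deg (Λ.comp q (z.seg 0 r)) = Λ.deg q + r := by
    rw [Λ.deg_comp _ _ hqρ, deg_seg_zero hr]
  have hxw : Λ.IsShift (Λ.deg (Λ.comp p (z.seg 0 r))) x (z.shift r hr) :=
    hdp ▸ hxz.trans (isShift_shift z hr)
  have hyw : Λ.IsShift (Λ.deg (Λ.comp q (z.seg 0 r))) y (z.shift r hr) :=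
    hdq ▸ hyz.trans (isShift_shift z hr)
  refine ⟨?_, ⟨_, hxw, by rw [hdp, hxρ]⟩, ⟨_, hyw, by rw [hdq, hyρ]⟩, _, hxw, hyw⟩
  rw [hm, hdp, hdq]
  funext i
  simp only [Pi.add_apply, Nat.cast_add]
  ring

/-- The `ρ` with `(ρ, τ) ∈ Λ^min(p, a)` and `qρ = bτ`: these index the decomposition of
`Z(p *ₛ q) ∩ Z(a *ₛ b)` into basic sets. -/
def interIndex (p q a b : Λ.Path) : Set Λ.Path :=
  {ρ | ∃ τ, (ρ, τ) ∈ Λ.minPairs p a ∧ Λ.comp q ρ = Λ.comp b τ}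

theorem FinitelyAligned.interIndex_finite (hΛ : Λ.FinitelyAligned) (p q a b : Λ.Path) :
    (Λ.interIndex p q a b).Finite :=
  ((hΛ p a).image Prod.fst).subset fun ρ ⟨τ, hρτ, _⟩ => ⟨(ρ, τ), hρτ, rfl⟩

theorem ZP_inter_ZP_subset (p q a b : Λ.Path) :
    Λ.ZP p q ∩ Λ.ZP a b ⊆ ⋃ ρ ∈ Λ.interIndex p q a b, Λ.ZP (Λ.comp p ρ) (Λ.comp q ρ) := by
  rintro ⟨x, m, y⟩ ⟨⟨hm, ⟨-, -, hx⟩, ⟨-, -, hy⟩, z, hxz, hyz⟩,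
    ⟨hm', ⟨-, -, hx'⟩, ⟨-, -, hy'⟩, z', hxz', hyz'⟩⟩
  -- The witness is `ρ = x(d p, N) = z(0, N - d p)`, paired with `τ = x(d a, N)`.
  set N := Λ.deg p ⊔ Λ.deg a
  have hN : x.LeDeg N := hxz.leDeg.sup hxz'.leDeg
  have hpN : Λ.deg p + (N - Λ.deg p) = N := add_tsub_cancel_of_le le_sup_left
  have haN : Λ.deg a + (N - Λ.deg a) = N := add_tsub_cancel_of_le le_sup_right
  have hr : z.LeDeg (N - Λ.deg p) := hxz.leDeg_iff.2 (by rwa [hpN])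
  have hr' : z'.LeDeg (N - Λ.deg a) := hxz'.leDeg_iff.2 (by rwa [haN])
  obtain ⟨hpρ, hxρ⟩ := hxz.seg_zero_comp hx hr
  obtain ⟨haτ, hxτ⟩ := hxz'.seg_zero_comp hx' hr'
  have hyρ := (hyz.seg_zero_comp hy hr).2
  have hyτ := (hyz'.seg_zero_comp hy' hr').2
  have hqb : Λ.deg q + (N - Λ.deg p) = Λ.deg b + (N - Λ.deg a) := by
    funext i
    have hpa := congrFun (hm.symm.trans hm') i
    have hpi : Λ.deg p i ≤ N i := le_sup_left
    have hai : Λ.deg a i ≤ N i := le_sup_right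
    simp only [Pi.add_apply, Pi.sub_apply] at hpa ⊢
    omega
  refine Set.mem_iUnion₂.2 ⟨_, ⟨z'.seg 0 (N - Λ.deg a), ⟨hpρ, haτ, ?_, ?_⟩, ?_⟩,
    mem_ZP_comp hm hx hy hxz hyz hr⟩
  · rw [hxρ, hxτ, hpN, haN]
  · rw [hxρ, hpN, deg_seg_zero hN]
  · rw [hyρ, hyτ, hqb]

theorem ZP_inter_ZP_eq {p q a b : Λ.Path} (hpq : Λ.src p = Λ.src q) (hab : Λ.src a = Λ.src b) :
    Λ.ZP p q ∩ Λ.ZP a b = ⋃ ρ ∈ Λ.interIndex p q a b, Λ.ZP (Λ.comp p ρ) (Λ.comp q ρ) :=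
  (ZP_inter_ZP_subset p q a b).antisymm <| Set.iUnion₂_subset fun _ ⟨_, ⟨hpρ, haτ, hpa, _⟩, hqb⟩ =>
    Set.subset_inter (ZP_comp_subset hpq hpρ) (by rw [hpa, hqb]; exact ZP_comp_subset hab haτ)

theorem disjoint_ZP_of_deg_eq {μ μ' ν ν' : Λ.Path} (hdeg : Λ.deg μ = Λ.deg μ') (hne : μ ≠ μ') :
    Disjoint (Λ.ZP μ ν) (Λ.ZP μ' ν') :=
  Set.disjoint_left.2 fun _ ⟨_, ⟨_, _, hx⟩, _⟩ ⟨_, ⟨_, _, hx'⟩, _⟩ =>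
    hne (by rw [← hx, ← hx', hdeg])

theorem pairwiseDisjoint_interIndex (p q a b : Λ.Path) :
    (Λ.interIndex p q a b).PairwiseDisjoint fun ρ => Λ.ZP (Λ.comp p ρ) (Λ.comp q ρ) :=
  fun _ ⟨_, ⟨hpρ, _, _, hdeg⟩, _⟩ _ ⟨_, ⟨hpρ', _, _, hdeg'⟩, _⟩ hne =>
    disjoint_ZP_of_deg_eq (hdeg.trans hdeg'.symm) fun h => hne (comp_left_cancel hpρ hpρ' h)

section CylinderSpan

variable (Λ) (R : Type) [CommRing R]

def cylinderSpan : Submodule R (Λ.bpSpace → R) :=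
  Submodule.span R
    {f | ∃ p q, Λ.src p = Λ.src q ∧ f = (Subtype.val ⁻¹' Λ.ZP p q).indicator 1}

variable {Λ R}

theorem indicator_ZP_mem_cylinderSpan {p q : Λ.Path} (hpq : Λ.src p = Λ.src q) :
    (Subtype.val ⁻¹' Λ.ZP p q).indicator 1 ∈ Λ.cylinderSpan R :=
  Submodule.subset_span ⟨p, q, hpq, rfl⟩

theorem src_comp_eq_src_comp {p q ν : Λ.Path} (hpq : Λ.src p = Λ.src q)
    (hpν : Λ.src p = Λ.rng ν) : Λ.src (Λ.comp p ν) = Λ.src (Λ.comp q ν) := by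
  rw [Λ.src_comp p ν hpν, Λ.src_comp q ν (hpq ▸ hpν)]

theorem indicator_ZP_mul_mem_cylinderSpan (hΛ : Λ.FinitelyAligned) {p q a b : Λ.Path}
    (hpq : Λ.src p = Λ.src q) (hab : Λ.src a = Λ.src b) :
    (Subtype.val ⁻¹' Λ.ZP p q).indicator 1 * (Subtype.val ⁻¹' Λ.ZP a b).indicator 1 ∈
      Λ.cylinderSpan R := by
  rw [← Set.inter_indicator_one, ← Set.preimage_inter, ZP_inter_ZP_eq hpq hab,
    Set.preimage_iUnion₂]
  exact indicator_biUnion_mem_of_pairwiseDisjoint (hΛ.interIndex_finite p q a b)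
    (fun _ hρ _ hρ' hne => (pairwiseDisjoint_interIndex p q a b hρ hρ' hne).preimage _)
    fun _ ⟨_, ⟨hpρ, _⟩, _⟩ => indicator_ZP_mem_cylinderSpan (src_comp_eq_src_comp hpq hpρ)

theorem mul_mem_cylinderSpan (hΛ : Λ.FinitelyAligned) {f g : Λ.bpSpace → R}
    (hf : f ∈ Λ.cylinderSpan R) (hg : g ∈ Λ.cylinderSpan R) : f * g ∈ Λ.cylinderSpan R := by
  refine mul_mem_span_of_mul_mem ?_ hf hg
  rintro _ ⟨p, q, hpq, rfl⟩ _ ⟨a, b, hab, rfl⟩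
  exact indicator_ZP_mul_mem_cylinderSpan hΛ hpq hab

theorem indicator_ZPD_mem_cylinderSpan (hΛ : Λ.FinitelyAligned) {p q : Λ.Path}
    {G : Set Λ.Path} (hpq : Λ.src p = Λ.src q) (hG : ∀ ν ∈ G, Λ.rng ν = Λ.src p)
    (hGfin : G.Finite) :
    (Subtype.val ⁻¹' Λ.ZPD p q G).indicator 1 ∈ Λ.cylinderSpan R := by
  have hsub : ⋃ ν ∈ G, Λ.ZP (Λ.comp p ν) (Λ.comp q ν) ⊆ Λ.ZP p q :=
    Set.iUnion₂_subset fun ν hν => ZP_comp_subset hpq (hG ν hν).symm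
  rw [ZPD, Set.preimage_sdiff, Set.indicator_sdiff (Set.preimage_mono hsub),
    Set.preimage_iUnion₂]
  exact Submodule.sub_mem _ (indicator_ZP_mem_cylinderSpan hpq)
    (indicator_biUnion_mem_of_mul_mem (fun _ hf _ hg => mul_mem_cylinderSpan hΛ hf hg) hGfin
      fun ν hν => indicator_ZP_mem_cylinderSpan (src_comp_eq_src_comp hpq (hG ν hν).symm))

end CylinderSpan

end KGraph

theorem indicator_union_mem_span_general {k : ℕ} (Λ : KGraph k)
    (hΛ : Λ.FinitelyAligned) (R : Type) [CommRing R]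
    (n : ℕ) (lam mu : Fin n → Λ.Path) (G : Fin n → Set Λ.Path)
    (hsrc : ∀ i, Λ.src (lam i) = Λ.src (mu i))
    (hG : ∀ i, ∀ ν ∈ G i, Λ.rng ν = Λ.src (lam i))
    (hGfin : ∀ i, (G i).Finite) :
    Set.indicator
        (Subtype.val ⁻¹' ⋃ i, Λ.ZPD (lam i) (mu i) (G i) : Set Λ.bpSpace)
        (fun _ => (1 : R)) ∈
      Submodule.span R {f : Λ.bpSpace → R | ∃ (p q : Λ.Path) (G₀ : Set Λ.Path),
        Λ.src p = Λ.src q ∧ (∀ ν ∈ G₀, Λ.rng ν = Λ.src p) ∧ G₀.Finite ∧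
        f = Set.indicator (Subtype.val ⁻¹' Λ.ZPD p q G₀) fun _ => (1 : R)} := by
  have hU : (Subtype.val ⁻¹' ⋃ i, Λ.ZPD (lam i) (mu i) (G i)).indicator 1 ∈
      Λ.cylinderSpan R := by
    rw [Set.preimage_iUnion, ← Set.biUnion_univ]
    exact indicator_biUnion_mem_of_mul_mem (fun _ hf _ hg => KGraph.mul_mem_cylinderSpan hΛ hf hg)
      Set.finite_univ fun i _ => KGraph.indicator_ZPD_mem_cylinderSpan hΛ (hsrc i) (hG i) (hGfin i)
  refine Submodule.span_le.2 ?_ hU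
  rintro _ ⟨p, q, hpq, rfl⟩
  refine Submodule.subset_span ⟨p, q, ∅, hpq, by simp, Set.finite_empty, ?_⟩
  rw [KGraph.ZPD, Set.biUnion_empty, Set.sdiff_empty]
  rfl

/-- the indicator function of a finite union of basic compact open
bisections lies in the `R`-span of indicator functions of basic sets. -/
theorem indicator_union_mem_span {k : ℕ} (hk : 0 < k) (Λ : KGraph k)
    (hΛ : Λ.FinitelyAligned) (R : Type) [CommRing R]
    (n : ℕ) (lam mu : Fin n → Λ.Path) (G : Fin n → Set Λ.Path)
    (hsrc : ∀ i, Λ.src (lam i) = Λ.src (mu i))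
    (hG : ∀ i, ∀ ν ∈ G i, Λ.rng ν = Λ.src (lam i))
    (hGfin : ∀ i, (G i).Finite) :
    Set.indicator
        (Subtype.val ⁻¹' ⋃ i, Λ.ZPD (lam i) (mu i) (G i) : Set Λ.bpSpace)
        (fun _ => (1 : R)) ∈
      Submodule.span R {f : Λ.bpSpace → R | ∃ (p q : Λ.Path) (G₀ : Set Λ.Path),
        Λ.src p = Λ.src q ∧ (∀ ν ∈ G₀, Λ.rng ν = Λ.src p) ∧ G₀.Finite ∧
        f = Set.indicator (Subtype.val ⁻¹' Λ.ZPD p q G₀) fun _ => (1 : R)} :=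
  indicator_union_mem_span_general Λ hΛ R n lam mu G hsrc hG hGfin
end
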